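/- arXiv:1912.12338 — 5 statements merged into one kernel-verified Lean document; each statement's English description precedes it below -/
import Mathlib

section
/- Let S be a commutative semiring, k, n, ℓ ∈ ℕ with 1 ≤ ℓ ≤ n, and M : Fin k → Fin n → S. Then perm'(M) = Σ_{i=0}^{k} perm'(A_i) · perm'(B_i), where A_i : Fin i → Fin ℓ → S is the top-left submatrix given by A_i a b = M a b (via the natural inclusions Fin i ⊆ Fin k and Fin ℓ ⊆ Fin n), and B_i : Fin (k−i) → Fin (n−ℓ) → S is the bottom-right submatrix given by B_i a b = M (i + a) (ℓ + b). -/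
/-!
A strictly increasing `f : Fin k → Fin n` sends an initial segment of the rows, of length
`i = #{a | f a < ℓ}`, into the first `ℓ` columns and the other rows into the last `n - ℓ`
columns. Grouping the terms of `perm' M` by `i`, the `i`-th group is a sum over pairs of strictly
increasing maps `Fin i → Fin ℓ` and `Fin (k - i) → Fin (n - ℓ)` glued by `Fin.append`, whose
products factor; so the group equals `perm' Aᵢ * perm' Bᵢ`.
-/

open scoped Classical

/-- The ordered permanent of a matrix `M : Fin k → Fin n → S` over a commutative semiring `S`:
the sum over all strictly increasing functions `f : Fin k → Fin n` of `∏ i, M i (f i)`. -/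
noncomputable def perm' {S : Type*} [CommSemiring S] {k n : ℕ} (M : Fin k → Fin n → S) : S :=
  ∑ f ∈ Finset.univ.filter (fun f : Fin k → Fin n => StrictMono f), ∏ i, M i (f i)

open Finset

def SplitsAt {k n : ℕ} (p ℓ : ℕ) (f : Fin k → Fin n) : Prop :=
  ∀ a, (f a : ℕ) < ℓ ↔ (a : ℕ) < p

theorem Fin.strictMono_append_iff {α : Type*} [Preorder α] {p q : ℕ} (f₁ : Fin p → α)
    (f₂ : Fin q → α) :
    StrictMono (Fin.append f₁ f₂) ↔
      StrictMono f₁ ∧ StrictMono f₂ ∧ ∀ a b, f₁ a < f₂ b := by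
  have castAdd_lt_natAdd (a : Fin p) (b : Fin q) : Fin.castAdd q a < Fin.natAdd p b := by
    rw [Fin.lt_def, Fin.val_castAdd, Fin.val_natAdd]; omega
  constructor
  · intro h
    refine ⟨fun a b hab => ?_, fun a b hab => ?_, fun a b => ?_⟩
    · simpa using h (Fin.strictMono_castAdd q hab)
    · simpa using h (Fin.strictMono_natAdd p hab)
    · simpa using h (castAdd_lt_natAdd a b)
  · rintro ⟨h₁, h₂, h₁₂⟩ a b hab
    induction a using Fin.addCases with
    | left a =>
      induction b using Fin.addCases with
      | left b => simpa using h₁ ((Fin.castAddOrderEmb q).lt_iff_lt.mp hab)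
      | right b => simpa using h₁₂ a b
    | right a =>
      induction b using Fin.addCases with
      | left b => exact absurd hab (castAdd_lt_natAdd b a).asymm
      | right b => simpa using h₂ ((Fin.natAdd_lt_natAdd_iff p).mp hab)

theorem sum_strictMono_mem_range_eq_sum_comp {α β γ M : Type*} [Fintype α] [Preorder α]
    [Fintype β] [Preorder β] [Fintype γ] [Preorder γ] [DecidableEq α] [AddCommMonoid M]
    (e : β ↪o γ) [DecidablePred fun f : α → γ => StrictMono f ∧ ∀ a, f a ∈ Set.range e]
    (F : (α → γ) → M) :
    ∑ f ∈ univ.filter (fun f : α → γ => StrictMono f ∧ ∀ a, f a ∈ Set.range e), F f =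
      ∑ g ∈ univ.filter (fun g : α → β => StrictMono g), F (e ∘ g) := by
  refine (sum_bij (fun g _ => e ∘ g) ?_ ?_ ?_ fun _ _ => rfl).symm
  · intro g hg
    simp only [mem_filter, mem_univ, true_and] at hg ⊢
    exact ⟨e.strictMono.comp hg, fun a => ⟨g a, rfl⟩⟩
  · intro g _ g' _ h
    exact funext fun a => e.injective (congrFun h a)
  · intro f hf
    simp only [mem_filter, mem_univ, true_and] at hf
    choose g hg using hf.2
    have hfg : e ∘ g = f := funext hg
    refine ⟨g, ?_, hfg⟩
    simp only [mem_filter, mem_univ, true_and]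
    exact fun a b hab => e.lt_iff_lt.mp (by simpa [← hfg] using hf.1 hab)

theorem strictMono_append_and_splitsAt_iff {p q ℓ m : ℕ} (f₁ : Fin p → Fin (ℓ + m))
    (f₂ : Fin q → Fin (ℓ + m)) :
    (StrictMono (Fin.append f₁ f₂) ∧ SplitsAt p ℓ (Fin.append f₁ f₂)) ↔
      (StrictMono f₁ ∧ ∀ a, f₁ a ∈ Set.range (Fin.castAddOrderEmb m)) ∧
        (StrictMono f₂ ∧ ∀ a, f₂ a ∈ Set.range (Fin.natAddOrderEmb ℓ)) := by
  have range_castAdd : Set.range (Fin.castAddOrderEmb m) = {b : Fin (ℓ + m) | (b : ℕ) < ℓ} :=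
    Fin.range_castLE (Nat.le_add_right ℓ m)
  have range_natAdd : Set.range (Fin.natAddOrderEmb ℓ) = {b : Fin (ℓ + m) | ℓ ≤ (b : ℕ)} :=
    Fin.range_natAdd ℓ m
  rw [Fin.strictMono_append_iff, SplitsAt, Fin.forall_fin_add, range_castAdd, range_natAdd]
  simp only [Fin.append_left, Fin.append_right, Fin.val_castAdd, Fin.val_natAdd, Fin.is_lt,
    iff_true, add_lt_iff_neg_left, not_lt_zero, iff_false, not_lt, Set.mem_ofPred_eq]
  constructor
  · rintro ⟨⟨h₁, h₂, -⟩, l₁, l₂⟩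
    exact ⟨⟨h₁, l₁⟩, h₂, l₂⟩
  · rintro ⟨⟨h₁, l₁⟩, h₂, l₂⟩
    exact ⟨⟨h₁, h₂, fun a b => Fin.lt_def.mpr ((l₁ a).trans_le (l₂ b))⟩, l₁, l₂⟩

theorem sum_strictMono_splitsAt_eq_perm'_mul_perm' {S : Type*} [CommSemiring S]
    {k n p q ℓ m : ℕ} (hk : p + q = k) (hn : ℓ + m = n) (M : Fin k → Fin n → S) :
    ∑ f ∈ univ.filter (fun f : Fin k → Fin n => StrictMono f ∧ SplitsAt p ℓ f),
        ∏ a, M a (f a) =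
      perm' (fun a b => M (Fin.cast hk (Fin.castAdd q a)) (Fin.cast hn (Fin.castAdd m b))) *
        perm' (fun a b => M (Fin.cast hk (Fin.natAdd p a)) (Fin.cast hn (Fin.natAdd ℓ b))) := by
  subst hk hn
  simp only [Fin.cast_eq_self]
  rw [sum_filter, ← (Fin.appendEquiv p q).sum_comp, Fintype.sum_prod_type]
  simp only [Fin.appendEquiv, Equiv.coe_fn_mk, strictMono_append_and_splitsAt_iff]
  simp only [Fin.prod_univ_add, Fin.append_left, Fin.append_right, ← ite_zero_mul_ite_zero]
  rw [← Fintype.sum_mul_sum, perm', perm', ← sum_filter, ← sum_filter,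
    sum_strictMono_mem_range_eq_sum_comp, sum_strictMono_mem_range_eq_sum_comp]
  simp only [Function.comp_apply, Fin.castAddOrderEmb_apply, Fin.natAddOrderEmb_apply]
  -- the filters on the two sides differ only in their instance arguments
  congr

theorem Monotone.card_filter_val_lt_eq_iff_splitsAt {k n : ℕ} {f : Fin k → Fin n}
    (hf : Monotone f) {ℓ i : ℕ} (hi : i ≤ k) :
    #{a | (f a : ℕ) < ℓ} = i ↔ SplitsAt i ℓ f := by
  constructor
  · rintro rfl a
    exact (Fin.lt_card_filter_univ_iff_apply_of_imp _
      fun b c hcb hb => (Fin.val_le_of_le (hf hcb)).trans_lt hb).symm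
  · intro h
    rw [filter_congr fun a _ => h a, Fin.card_filter_val_lt, min_eq_right hi]

theorem perm'_eq_sum_sum_strictMono_splitsAt {S : Type*} [CommSemiring S] {k n : ℕ} (ℓ : ℕ)
    (M : Fin k → Fin n → S) :
    perm' M = ∑ i : Fin (k + 1),
      ∑ f ∈ univ.filter (fun f : Fin k → Fin n => StrictMono f ∧ SplitsAt i ℓ f),
        ∏ a, M a (f a) := by
  let lowCount (f : Fin k → Fin n) : Fin (k + 1) :=
    ⟨#{a | (f a : ℕ) < ℓ}, Nat.lt_succ_of_le ((card_filter_le _ _).trans_eq (card_fin k))⟩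
  rw [perm', ← sum_fiberwise _ lowCount]
  refine sum_congr rfl fun i _ => sum_congr ?_ fun _ _ => rfl
  rw [filter_filter]
  refine filter_congr fun f _ => and_congr_right fun hf => ?_
  rw [← hf.monotone.card_filter_val_lt_eq_iff_splitsAt i.is_le, Fin.ext_iff]

/-- For `1 ≤ ℓ ≤ n`, the ordered permanent satisfies the recursion
`perm'(M) = Σ_{i=0}^{k} perm'(Aᵢ) · perm'(Bᵢ)`, where `Aᵢ` is the top-left `i × ℓ`
submatrix and `Bᵢ` is the bottom-right `(k−i) × (n−ℓ)` submatrix. -/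
theorem perm'_recursion {S : Type*} [CommSemiring S] (k n ℓ : ℕ)
    (h2 : ℓ ≤ n) (M : Fin k → Fin n → S) :
    perm' M = ∑ i : Fin (k + 1),
      perm' (fun (a : Fin i.val) (b : Fin ℓ) =>
          M (Fin.castLE i.is_le a) (Fin.castLE h2 b)) *
      perm' (fun (a : Fin (k - i.val)) (b : Fin (n - ℓ)) =>
          M ⟨i.val + a.val, by have := a.isLt; omega⟩
            ⟨ℓ + b.val, by have := b.isLt; omega⟩) := by
  rw [perm'_eq_sum_sum_strictMono_splitsAt ℓ M]
  -- `Fin.cast` of `Fin.castAdd` / `Fin.natAdd` is definitionally `Fin.castLE` / `⟨i + a, _⟩`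
  exact sum_congr rfl fun i _ =>
    sum_strictMono_splitsAt_eq_perm'_mul_perm' (Nat.add_sub_of_le i.is_le) (Nat.add_sub_of_le h2) M
end

section
/- Let S be a commutative semiring, k, n ∈ ℕ, and M : Fin k → Fin n → S. Then perm(M) = Σ_{σ} perm'(Mσ), where σ ranges over all permutations of Fin k and Mσ : Fin k → Fin n → S is defined by Mσ i c = M (σ i) c. That is, the permanent (sum over all injections) equals the sum over all k! row orderings of the ordered permanent. -/
open scoped Classical

/-- The permanent of a rectangular matrix `M : R → C → S` over a commutative semiring `S`:
the sum over all injective functions `f : R → C` of `∏ r, M r (f r)`. -/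
noncomputable def perm {R C S : Type*} [Fintype R] [Fintype C] [CommSemiring S]
    (M : R → C → S) : S :=
  ∑ f ∈ Finset.univ.filter (fun f : R → C => Function.Injective f), ∏ r, M r (f r)

/-- The permanent (sum over all injections) equals the sum over all `k!` row orderings
of the ordered permanent: `perm(M) = Σ_σ perm'(fun i c => M (σ i) c)`. -/
theorem perm_eq_sum_perm' {S : Type*} [CommSemiring S] (k n : ℕ) (M : Fin k → Fin n → S) :
    perm M = ∑ σ : Equiv.Perm (Fin k), perm' (fun i c => M (σ i) c) := by
  rw [perm]
  simp only [perm']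
  rw [← Finset.sum_product']
  refine Finset.sum_nbij' (fun f => (Tuple.sort f, f ∘ Tuple.sort f))
    (fun p => p.2 ∘ p.1.symm) ?_ ?_ ?_ ?_ ?_
  · intro f hf
    simp only [Finset.mem_filter, Finset.mem_univ, true_and] at hf
    simp only [Finset.mem_product, Finset.mem_filter, Finset.mem_univ, true_and]
    exact (Tuple.monotone_sort f).strictMono_of_injective
      (hf.comp (Equiv.injective _))
  · intro p hp
    simp only [Finset.mem_product, Finset.mem_filter, Finset.mem_univ, true_and] at hp
    simp only [Finset.mem_filter, Finset.mem_univ, true_and]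
    exact hp.injective.comp (Equiv.injective _)
  · intro f hf
    funext r
    simp
  · intro p hp
    simp only [Finset.mem_product, Finset.mem_filter, Finset.mem_univ, true_and] at hp
    have hf : Function.Injective (p.2 ∘ p.1.symm) := hp.injective.comp (Equiv.injective _)
    have hσ : p.1 = Tuple.sort (p.2 ∘ p.1.symm) := by
      rw [Tuple.eq_sort_iff]
      constructor
      · have : (p.2 ∘ ⇑p.1.symm) ∘ ⇑p.1 = p.2 := by funext i; simp
        rw [this]; exact hp.monotone
      · intro i j hij heq
        exact absurd (hf heq) (p.1.injective.ne hij.ne)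
    rw [Prod.ext_iff]
    refine ⟨hσ.symm, ?_⟩
    show (p.2 ∘ p.1.symm) ∘ Tuple.sort (p.2 ∘ p.1.symm) = p.2
    rw [← hσ]; funext i; simp
  · intro f hf
    rw [← Equiv.prod_comp (Tuple.sort f)]
    rfl
end

section
/- Let S be a commutative semiring, R, C, T finite types, col : C → T a coloring of the columns, and v : T → R → S a family of column vectors; let M : R → C → S be the matrix M r c = v (col c) r. For t ∈ T let n(t) denote the number of columns c ∈ C with col c = t. Then perm(M) = Σ_{φ : R → T} (Π_{t ∈ T} Nat.descFactorial (n(t)) |φ⁻¹(t)|) • Π_{r ∈ R} v (φ r) r, where the sum ranges over all functions φ : R → T, |φ⁻¹(t)| is the number of rows r with φ r = t, Nat.descFactorial m j = m(m−1)⋯(m−j+1), and • denotes natural-number scalar multiplication. In particular, the permanent of M depends only on the number of occurrences of each vector as a column of M. -/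
open scoped Classical

/-- Injective functions `f : R → C` with `col ∘ f = φ` correspond to families of
fiberwise injections. -/
noncomputable def fiberEquiv {R C T : Type*} (col : C → T) (φ : R → T) :
    {f : R → C // Function.Injective f ∧ col ∘ f = φ} ≃
    (∀ t, {r // φ r = t} ↪ {c // col c = t}) where
  toFun f t :=
    ⟨fun r => ⟨f.1 r.1, by rw [show col (f.1 r.1) = φ r.1 from congrFun f.2.2 r.1, r.2]⟩,
     fun a b h => Subtype.ext (f.2.1 (congrArg Subtype.val h))⟩
  invFun g :=
    ⟨fun r => (g (φ r) ⟨r, rfl⟩).1, by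
      have key : ∀ (t t' : T) (e : t = t') (r : R) (hr : φ r = t),
          ((g t ⟨r, hr⟩ : {c // col c = t}) : C) = (g t' ⟨r, hr.trans e⟩ : C) := by
        rintro t _ rfl r hr; rfl
      constructor
      · intro a b h
        have ht : φ a = φ b := by
          simp only [] at h
          rw [← (g (φ a) ⟨a, rfl⟩).2, ← (g (φ b) ⟨b, rfl⟩).2, h]
        have h2 : ((g (φ b) ⟨a, ht⟩ : {c // col c = φ b}) : C) = (g (φ b) ⟨b, rfl⟩ : C) := by
          rw [← key (φ a) (φ b) ht a rfl]; exact h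
        have := (g (φ b)).injective (Subtype.ext h2)
        exact congrArg Subtype.val this
      · funext r
        exact (g (φ r) ⟨r, rfl⟩).2⟩
  left_inv f := Subtype.ext rfl
  right_inv g := by
    funext t
    ext ⟨r, hr⟩
    subst hr
    rfl

theorem card_fiber {R C T : Type*} [Fintype R] [Fintype C] [Fintype T]
    (col : C → T) (φ : R → T) :
    (Finset.univ.filter
        (fun f : R → C => Function.Injective f ∧ col ∘ f = φ)).card =
    ∏ t : T, Nat.descFactorial
        ((Finset.univ.filter (fun c : C => col c = t)).card)
        ((Finset.univ.filter (fun r : R => φ r = t)).card) := by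
  rw [← Fintype.card_subtype]
  rw [Fintype.card_congr (fiberEquiv col φ), Fintype.card_pi]
  refine Finset.prod_congr rfl fun t _ => ?_
  rw [Fintype.card_embedding_eq, Fintype.card_subtype, Fintype.card_subtype]

/-- If the columns of `M` are given by a coloring `col : C → T` and column vectors
`v : T → R → S` (so `M r c = v (col c) r`), then the permanent of `M` only depends on
the number of occurrences of each column vector:
`perm M = Σ_{φ : R → T} (Π_t descFactorial (n t) |φ⁻¹(t)|) • Π_r v (φ r) r`,
where `n t` is the number of columns of color `t`. -/
theorem perm_eq_sum_colorings {R C T S : Type*} [Fintype R] [Fintype C] [Fintype T]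
    [CommSemiring S] (col : C → T) (v : T → R → S) :
    perm (fun (r : R) (c : C) => v (col c) r) =
    ∑ φ : R → T,
      (∏ t : T, Nat.descFactorial
          ((Finset.univ.filter (fun c : C => col c = t)).card)
          ((Finset.univ.filter (fun r : R => φ r = t)).card)) •
      ∏ r : R, v (φ r) r := by
  rw [perm, ← Finset.sum_fiberwise (g := fun f : R → C => col ∘ f)]
  refine Finset.sum_congr rfl fun φ _ => ?_
  rw [← card_fiber col φ, ← Finset.sum_const]
  rw [Finset.filter_filter]
  refine Finset.sum_congr rfl fun f hf => ?_
  simp only [Finset.mem_filter] at hf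
  refine Finset.prod_congr rfl fun r _ => ?_
  rw [show col (f r) = φ r from congrFun hf.2.2 r]
end

section
/- Let M be a finite additive commutative monoid and s ∈ M. Then there exists ω ≥ 1 such that the element e := ω • s is additively idempotent, i.e., e + e = e, and the set G = { n • s : n ≥ ω } is an abelian group under the addition of M with identity e; explicitly: G is closed under addition, x + e = x for every x ∈ G, and for every x ∈ G there exists y ∈ G with x + y = e. Moreover, G is cyclic with generator (ω+1) • s: every element x ∈ G equals m • ((ω+1) • s) for some m ≥ 1. -/
/-- In a finite additive commutative monoid, for every element `s` there is `ω ≥ 1` such that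
`e = ω • s` is additively idempotent and the set `G = { n • s : n ≥ ω }` is an abelian group
under the addition of `M` with identity `e`: `G` is closed under addition, `e` is a
(right) identity on `G`, every element of `G` has an inverse in `G`, and `G` is cyclic
with generator `(ω+1) • s`. -/
theorem exists_idempotent_cyclic_group {M : Type*} [AddCommMonoid M] [Finite M] (s : M) :
    ∃ ω : ℕ, 1 ≤ ω ∧
      (ω • s + ω • s = ω • s) ∧
      (∀ x ∈ {x : M | ∃ n, ω ≤ n ∧ x = n • s}, ∀ y ∈ {x : M | ∃ n, ω ≤ n ∧ x = n • s},
        x + y ∈ {x : M | ∃ n, ω ≤ n ∧ x = n • s}) ∧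
      (∀ x ∈ {x : M | ∃ n, ω ≤ n ∧ x = n • s}, x + ω • s = x) ∧
      (∀ x ∈ {x : M | ∃ n, ω ≤ n ∧ x = n • s},
        ∃ y ∈ {x : M | ∃ n, ω ≤ n ∧ x = n • s}, x + y = ω • s) ∧
      (∀ x ∈ {x : M | ∃ n, ω ≤ n ∧ x = n • s},
        ∃ m : ℕ, 1 ≤ m ∧ x = m • ((ω + 1) • s)) := by
  have key : ∃ i q, 1 ≤ i ∧ 1 ≤ q ∧ (i + q) • s = i • s := by
    obtain ⟨a, b, hab, heq⟩ :=
      Finite.exists_ne_map_eq_of_infinite (fun n : ℕ => (n + 1) • s)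
    rcases Nat.lt_or_ge a b with h | h
    · exact ⟨a + 1, b - a, by omega, by omega, by
        rw [show a + 1 + (b - a) = b + 1 by omega]; exact heq.symm⟩
    · have h' : b < a := lt_of_le_of_ne h (Ne.symm hab)
      exact ⟨b + 1, a - b, by omega, by omega, by
        rw [show b + 1 + (a - b) = a + 1 by omega]; exact heq⟩
  obtain ⟨i, q, hi, hq, hstep⟩ := key
  have step : ∀ n, i ≤ n → (n + q) • s = n • s := by
    intro n hn
    obtain ⟨t, rfl⟩ := Nat.exists_eq_add_of_le hn
    rw [show i + t + q = (i + q) + t by ring, add_nsmul, hstep, ← add_nsmul]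
  have per : ∀ k n, i ≤ n → (n + k * q) • s = n • s := by
    intro k
    induction k with
    | zero => simp
    | succ k ih =>
      intro n hn
      rw [show n + (k + 1) * q = n + k * q + q by ring,
        step (n + k * q) (by omega), ih n hn]
  refine ⟨i * q, Nat.one_le_iff_ne_zero.2 (by positivity), ?_, ?_, ?_, ?_, ?_⟩
  · rw [← add_nsmul]
    exact per i (i * q) (Nat.le_mul_of_pos_right i hq)
  · rintro x ⟨n, hn, rfl⟩ y ⟨m, hm, rfl⟩
    exact ⟨n + m, by omega, (add_nsmul s n m).symm⟩
  · rintro x ⟨n, hn, rfl⟩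
    rw [← add_nsmul]
    exact per i n (by have := Nat.le_mul_of_pos_right i hq; omega)
  · rintro x ⟨n, hn, rfl⟩
    refine ⟨(i * q + n * (q - 1)) • s, ⟨i * q + n * (q - 1), by omega, rfl⟩, ?_⟩
    rw [← add_nsmul, show n + (i * q + n * (q - 1)) = i * q + n * q by
      have : n * q = n + n * (q - 1) := by
        cases q with | zero => omega | succ q => rw [Nat.succ_sub_one, Nat.mul_succ]; omega
      omega]
    exact per n (i * q) (Nat.le_mul_of_pos_right i hq)
  · rintro x ⟨n, hn, rfl⟩
    have hin : i ≤ n := by have := Nat.le_mul_of_pos_right i hq; omega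
    refine ⟨n, by omega, ?_⟩
    rw [← mul_nsmul', show n * (i * q + 1) = n + (n * i) * q by ring]
    exact (per (n * i) n hin).symm
end

section
/- Let M be a finite additive commutative monoid, s ∈ M, and let N = (Nat.card M)! be the factorial of the cardinality of M. Then N • s + N • s = N • s, i.e., N • s is an additively idempotent element of M. -/
/-- In a finite additive commutative monoid `M`, the element `(Nat.card M)! • s` is
additively idempotent. -/
theorem factorial_card_nsmul_idempotent {M : Type*} [AddCommMonoid M] [Finite M] (s : M) :
    (Nat.card M).factorial • s + (Nat.card M).factorial • s = (Nat.card M).factorial • s := by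
  set N := Nat.card M with hN
  have : Fintype M := Fintype.ofFinite M
  -- pigeonhole on Fin (N+1) → M, k ↦ k • s
  have hcard : Fintype.card M < Fintype.card (Fin (N + 1)) := by
    simp [hN, Nat.card_eq_fintype_card]
  obtain ⟨a, b, hab, heq⟩ := Fintype.exists_ne_map_eq_of_card_lt
    (fun k : Fin (N + 1) => (k : ℕ) • s) hcard
  -- wlog a < b
  wlog hlt : (a : ℕ) < (b : ℕ) generalizing a b
  · exact this b a hab.symm heq.symm
      (lt_of_le_of_ne (not_lt.mp hlt) (fun h => hab (Fin.ext h.symm)))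
  set i := (a : ℕ)
  set p := (b : ℕ) - i with hp
  have hb : (b : ℕ) = i + p := by omega
  have hstep : ∀ m : ℕ, i ≤ m → (m + p) • s = m • s := by
    intro m him
    obtain ⟨t, rfl⟩ := Nat.exists_eq_add_of_le him
    have : (i + p) • s = i • s := by rw [← hb]; exact heq.symm
    calc (i + t + p) • s = (i + p) • s + t • s := by
          rw [← add_nsmul]; ring_nf
      _ = i • s + t • s := by rw [this]
      _ = (i + t) • s := by rw [← add_nsmul]
  have hiter : ∀ k m : ℕ, i ≤ m → (m + k * p) • s = m • s := by
    intro k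
    induction k with
    | zero => simp
    | succ k ih =>
      intro m him
      have : m + (k + 1) * p = (m + p) + k * p := by ring
      rw [this, ih _ (le_trans him (Nat.le_add_right _ _)), hstep m him]
  have hppos : 0 < p := by omega
  have hpN : p ≤ N := by have := b.isLt; omega
  have hpdvd : p ∣ N.factorial := Nat.dvd_factorial hppos hpN
  have hiF : i ≤ N.factorial := by
    have h1 : i ≤ N := by have := b.isLt; omega
    exact le_trans h1 (Nat.self_le_factorial _)
  obtain ⟨c, hc⟩ := hpdvd
  calc N.factorial • s + N.factorial • s = (N.factorial + N.factorial) • s := by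
        rw [add_nsmul]
    _ = (N.factorial + c * p) • s := by rw [hc]; ring_nf
    _ = N.factorial • s := hiter c _ hiF
end
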